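/- Given positive integers n₁ ≤ n₂ ≤ ⋯ ≤ n_k with k ≥ 2, the complete multipartite graph K_{n₁,…,n_k} satisfies n_k ≤ DOM(K_{n₁,…,n_k}) ≤ max{n_k, k}. In particular, if n_k ≥ k, then DOM(K_{n₁,…,n_k}) = n_k. -/

import Mathlib

open SimpleGraph

variable {V : Type*}

/-- `D` is an orientation of the simple graph `G`: arcs only along edges, and each edge
gets exactly one of its two possible directions. -/
def IsOrientation (G : SimpleGraph V) (D : V → V → Prop) : Prop :=
  (∀ u v, D u v → G.Adj u v) ∧ (∀ u v, G.Adj u v → (D u v ↔ ¬ D v u))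

/-- `S` is a dominating set of the digraph `D`. -/
def IsDomSet (D : V → V → Prop) (S : Finset V) : Prop :=
  ∀ v, v ∉ S → ∃ u ∈ S, D u v

/-- Domination number of a digraph. -/
noncomputable def domNum (D : V → V → Prop) : ℕ :=
  sInf {n | ∃ S : Finset V, S.card = n ∧ IsDomSet D S}

/-- Orientable domination number of a graph. -/
noncomputable def DOM (G : SimpleGraph V) : ℕ :=
  sSup {n | ∃ D : V → V → Prop, IsOrientation G D ∧ domNum D = n}

/-- Independence number. -/
noncomputable def indepNum (G : SimpleGraph V) : ℕ :=
  sSup {n | ∃ S : Finset V, S.card = n ∧ ∀ u ∈ S, ∀ v ∈ S, ¬ G.Adj u v}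

/-- Matching number. -/
noncomputable def matchNum (G : SimpleGraph V) : ℕ :=
  sSup {n | ∃ M : Finset (Sym2 V), M.card = n ∧ (∀ e ∈ M, e ∈ G.edgeSet) ∧
    ∀ e ∈ M, ∀ f ∈ M, e ≠ f → ∀ v, v ∈ e → v ∉ f}

/-- Maximum order of a bipartite induced subgraph. -/
noncomputable def bipNum (G : SimpleGraph V) : ℕ :=
  sSup {n | ∃ s : Finset V, s.card = n ∧ (G.induce (s : Set V)).Colorable 2}

/-- Join of `G` with a single universal vertex (`none`). -/
def joinK1 (G : SimpleGraph V) : SimpleGraph (Option V) :=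
  SimpleGraph.fromRel (fun a b => a = none ∨ ∃ u v, a = some u ∧ b = some v ∧ G.Adj u v)

/-- Lexicographic product `G ∘ H`. -/
def lexProd {W : Type*} (G : SimpleGraph V) (H : SimpleGraph W) : SimpleGraph (V × W) :=
  SimpleGraph.fromRel (fun a b => G.Adj a.1 b.1 ∨ (a.1 = b.1 ∧ H.Adj a.2 b.2))

/-- Corona `G ⊙ H`: vertex `(u, none)` is the vertex `u` of `G`, the vertices `(u, some w)`
form the copy of `H` joined to `u`. -/
def corona {W : Type*} (G : SimpleGraph V) (H : SimpleGraph W) : SimpleGraph (V × Option W) :=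
  SimpleGraph.fromRel (fun a b =>
    (a.2 = none ∧ b.2 = none ∧ G.Adj a.1 b.1) ∨
    (a.1 = b.1 ∧ ∃ w w', a.2 = some w ∧ b.2 = some w' ∧ H.Adj w w') ∨
    (a.1 = b.1 ∧ a.2 = none ∧ b.2 ≠ none))

/-- A digraph is acyclic if it has no directed cycle. -/
def DigraphAcyclic (D : V → V → Prop) : Prop :=
  ¬ ∃ (m : ℕ) (c : ℕ → V), 0 < m ∧ (∀ i < m, D (c i) (c (i + 1))) ∧ c m = c 0

/-- A packing of a digraph: no arc joins two of its vertices and no vertex has two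
out-neighbors in it. -/
def IsPacking (D : V → V → Prop) (P : Finset V) : Prop :=
  (∀ u ∈ P, ∀ v ∈ P, ¬ D u v) ∧
  (∀ u ∈ P, ∀ v ∈ P, u ≠ v → ∀ w, ¬ (D w u ∧ D w v))

/-- Packing number of a digraph. -/
noncomputable def packNum (D : V → V → Prop) : ℕ :=
  sSup {n | ∃ P : Finset V, P.card = n ∧ IsPacking D P}

/-! For the lower bound, orient every edge at the largest part away from it; all its vertices are
then sources, so every dominating set contains it. For the upper bound, take any orientation. If
some part `A` dominates every vertex outside it, then `A` is a dominating set. Otherwise each part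
`A_i` has a vertex `w_i` outside it that no vertex of `A_i` beats; then `w_i` beats all of `A_i`,
and `{w_i}` is a dominating set of size at most `k`. -/

section Domination

lemma isDomSet_univ [Fintype V] (D : V → V → Prop) : IsDomSet D Finset.univ :=
  fun v hv => absurd (Finset.mem_univ v) hv

lemma IsDomSet.mem_of_forall_not {D : V → V → Prop} {S : Finset V} (hS : IsDomSet D S) {v : V}
    (hv : ∀ u, ¬ D u v) : v ∈ S := by
  by_contra hvS
  obtain ⟨u, -, hu⟩ := hS v hvS
  exact hv u hu

lemma domNum_le_card {D : V → V → Prop} {S : Finset V} (hS : IsDomSet D S) :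
    domNum D ≤ S.card :=
  Nat.sInf_le ⟨S, rfl, hS⟩

lemma le_domNum [Fintype V] {D : V → V → Prop} {m : ℕ}
    (h : ∀ S, IsDomSet D S → m ≤ S.card) : m ≤ domNum D :=
  le_csInf ⟨_, Finset.univ, rfl, isDomSet_univ D⟩ (by rintro _ ⟨S, rfl, hS⟩; exact h S hS)

lemma domNum_le_DOM [Fintype V] {G : SimpleGraph V} {D : V → V → Prop}
    (hD : IsOrientation G D) : domNum D ≤ DOM G :=
  le_csSup ⟨Fintype.card V, by rintro _ ⟨D', -, rfl⟩; exact domNum_le_card (isDomSet_univ D')⟩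
    ⟨D, hD, rfl⟩

lemma DOM_le {G : SimpleGraph V} {m : ℕ} (h : ∀ D, IsOrientation G D → domNum D ≤ m) :
    DOM G ≤ m :=
  csSup_le' (by rintro _ ⟨D, hD, rfl⟩; exact h D hD)

end Domination

section CompleteMultipartite

variable {ι : Type*} {α : ι → Type*}

def sourcePartOrientation [LinearOrder ι] (L : ι) (u v : Σ i, α i) : Prop :=
  u.1 ≠ v.1 ∧ v.1 ≠ L ∧ (u.1 = L ∨ u.1 < v.1)

lemma isOrientation_sourcePartOrientation [LinearOrder ι] (L : ι) :
    IsOrientation (completeMultipartiteGraph α) (sourcePartOrientation L) := by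
  refine ⟨fun u v h => h.1, fun u v (huv : u.1 ≠ v.1) => ?_⟩
  simp only [sourcePartOrientation]
  grind

lemma card_le_card_of_isDomSet_sourcePartOrientation [LinearOrder ι] {L : ι} [Fintype (α L)]
    {S : Finset (Σ i, α i)} (hS : IsDomSet (sourcePartOrientation L) S) :
    Fintype.card (α L) ≤ S.card :=
  Finset.card_le_card_of_injOn (Sigma.mk L)
    (fun _ _ => hS.mem_of_forall_not fun _ huv => huv.2.1 rfl) sigma_mk_injective.injOn

lemma isDomSet_part {i : ι} [Fintype (α i)] {D : (Σ i, α i) → (Σ i, α i) → Prop}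
    (h : ∀ v : Σ i, α i, v.1 ≠ i → ∃ a, D ⟨i, a⟩ v) :
    IsDomSet D (Finset.univ.map (Function.Embedding.sigmaMk i)) := by
  rintro ⟨j, b⟩ hv
  have hji : j ≠ i := by
    rintro rfl
    exact hv (Finset.mem_map_of_mem _ (Finset.mem_univ b))
  obtain ⟨a, ha⟩ := h ⟨j, b⟩ hji
  exact ⟨⟨i, a⟩, Finset.mem_map_of_mem _ (Finset.mem_univ a), ha⟩

lemma isDomSet_image [Fintype ι] [DecidableEq (Σ i, α i)] {D : (Σ i, α i) → (Σ i, α i) → Prop}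
    {w : ι → Σ i, α i} (hw : ∀ i a, D (w i) ⟨i, a⟩) : IsDomSet D (Finset.univ.image w) :=
  fun v _ => ⟨w v.1, Finset.mem_image_of_mem _ (Finset.mem_univ _), hw v.1 v.2⟩

lemma domNum_le_max_of_isOrientation [Fintype ι] [∀ i, Fintype (α i)]
    {D : (Σ i, α i) → (Σ i, α i) → Prop} (hD : IsOrientation (completeMultipartiteGraph α) D)
    {m : ℕ} (hm : ∀ i, Fintype.card (α i) ≤ m) : domNum D ≤ max m (Fintype.card ι) := by
  classical
  by_cases hpart : ∃ i, ∀ v : Σ i, α i, v.1 ≠ i → ∃ a, D ⟨i, a⟩ v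
  · obtain ⟨i, hi⟩ := hpart
    calc domNum D ≤ (Finset.univ.map (Function.Embedding.sigmaMk i)).card :=
          domNum_le_card (isDomSet_part hi)
      _ ≤ m := by simpa using hm i
      _ ≤ _ := le_max_left _ _
  · push Not at hpart
    choose w hw_ne hw_beaten using hpart
    have hw : ∀ i a, D (w i) ⟨i, a⟩ := fun i a =>
      not_not.mp fun h => hw_beaten i a ((hD.2 _ _ (Ne.symm (hw_ne i))).mpr h)
    calc domNum D ≤ (Finset.univ.image w).card := domNum_le_card (isDomSet_image hw)
      _ ≤ Fintype.card ι := Finset.card_image_le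
      _ ≤ _ := le_max_right _ _

end CompleteMultipartite

theorem stmt18 (k : ℕ) (hk : 2 ≤ k) (n : Fin k → ℕ)
    (hmono : Monotone n) :
    n ⟨k - 1, by omega⟩ ≤ DOM (completeMultipartiteGraph (fun i => Fin (n i))) ∧
    DOM (completeMultipartiteGraph (fun i => Fin (n i))) ≤ max (n ⟨k - 1, by omega⟩) k ∧
    (k ≤ n ⟨k - 1, by omega⟩ →
      DOM (completeMultipartiteGraph (fun i => Fin (n i))) = n ⟨k - 1, by omega⟩) := by
  set L : Fin k := ⟨k - 1, by omega⟩
  have hlower : n L ≤ DOM (completeMultipartiteGraph (fun i => Fin (n i))) :=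
    calc n L = Fintype.card (Fin (n L)) := (Fintype.card_fin _).symm
      _ ≤ domNum (sourcePartOrientation (α := fun i => Fin (n i)) L) :=
          le_domNum fun _ hS => card_le_card_of_isDomSet_sourcePartOrientation hS
      _ ≤ _ := domNum_le_DOM (isOrientation_sourcePartOrientation L)
  have hupper : DOM (completeMultipartiteGraph (fun i => Fin (n i))) ≤ max (n L) k := by
    have hle : ∀ i, Fintype.card (Fin (n i)) ≤ n L := fun i => by
      simpa using hmono (Fin.le_def.mpr (by simp only [L]; omega) : i ≤ L)
    simpa using DOM_le fun _ hD => domNum_le_max_of_isOrientation hD hle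
  exact ⟨hlower, hupper, fun hkn => le_antisymm (by rwa [max_eq_left hkn] at hupper) hlower⟩
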